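/- arXiv:2112.14456 — 2 statements merged into one kernel-verified Lean document; each statement's English description precedes it below -/
import Mathlib

section
/- One-step linear contraction of the non-adaptive sketched Bregman projection method: let f : ℝ^n → ℝ be μ-strongly convex, x ∈ ℝ^n, x_* ∈ ∂f(x), A x̄ = b, and p ∈ Δ_q^†. Assume (i) a spectral bound: σ > 0 with Σ_i p_i·vᵀ Z_i v ≥ σ‖v‖² for all v ∉ Null(A); (ii) an error bound: γ > 0 with γ·D_f^{x_*}(x, x̄) ≤ ‖Ax − b‖²; (iii) for each i, a point x̂_i with S_iᵀ A x̂_i = S_iᵀ b and a subgradient x̂_{i,*} ∈ ∂f(x̂_i) satisfying D_f^{x̂_{i,*}}(x̂_i, y) ≤ D_f^{x_*}(x, y) − D_f^{x_*}(x, x̂_i) for all y with S_iᵀ A y = S_iᵀ b. Then Σ_{i=1}^q p_i·D_f^{x̂_{i,*}}(x̂_i, x̄) ≤ (1 − μγσ/(2‖A‖²))·D_f^{x_*}(x, x̄), where ‖A‖ is the spectral norm of A (assume A ≠ 0). -/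
open Matrix

/-- The spectral norm (ℓ²→ℓ² operator norm) of a real matrix. -/
noncomputable def specNorm {m n : ℕ} (A : Matrix (Fin m) (Fin n) ℝ) : ℝ :=
  ‖LinearMap.toContinuousLinearMap (Matrix.toEuclideanLin A)‖

/-- `x_*` is a subgradient of `f` at `x`. -/
def IsSubgrad {n : ℕ} (f : (Fin n → ℝ) → ℝ) (x xs : Fin n → ℝ) : Prop :=
  ∀ u : Fin n → ℝ, f u ≥ f x + xs ⬝ᵥ (u - x)

/-- `f` is μ-strongly convex (w.r.t. the Euclidean norm, ‖v‖² = v ⬝ᵥ v). -/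
def StronglyConvexWith {n : ℕ} (μ : ℝ) (f : (Fin n → ℝ) → ℝ) : Prop :=
  ∀ x y xs : Fin n → ℝ, IsSubgrad f x xs →
    f y ≥ f x + xs ⬝ᵥ (y - x) + μ / 2 * ((y - x) ⬝ᵥ (y - x))

/-- Bregman distance D_f^{x_*}(x, y) := f(y) − f(x) − ⟨x_*, y − x⟩. -/
noncomputable def breg {n : ℕ} (f : (Fin n → ℝ) → ℝ) (xs x y : Fin n → ℝ) : ℝ :=
  f y - f x - xs ⬝ᵥ (y - x)

/-!
Write `w = x - x̄` and `B_i = S_iᵀ A`. Taking the projection inequality (iii) at `y = x̄` gives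
`D(x̂_i, x̄) ≤ D(x, x̄) - D(x, x̂_i)`, so it suffices to bound the average of `D(x, x̂_i)` from
below. By strong convexity `D(x, x̂_i) ≥ (μ/2)‖x - x̂_i‖²`. As `B_i x̂_i = B_i x̄`, the vectors
`x - x̄` and `x - x̂_i` have the same image under `B_i`, hence under the orthogonal projection
`Z_i = B_iᵀ W_i B_i`, so `wᵀ Z_i w ≤ ‖x - x̂_i‖²`. Averaging and the spectral bound give
`Σ p_i D(x, x̂_i) ≥ (μσ/2)‖w‖² ≥ (μσ/(2‖A‖²))‖Aw‖²`, and the error bound `‖Aw‖² ≥ γ D(x, x̄)`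
finishes the proof.
-/

section Euclidean

variable {ι : Type*} [Fintype ι]

lemma dotProduct_self_eq_norm_sq (v : ι → ℝ) : v ⬝ᵥ v = ‖WithLp.toLp 2 v‖ ^ 2 := by
  rw [← real_inner_self_eq_norm_sq, EuclideanSpace.inner_toLp_toLp, star_trivial]

lemma dotProduct_mulVec_le_of_isIdempotent {P : Matrix ι ι ℝ} (hsymm : Pᵀ = P)
    (hidem : P * P = P) (v : ι → ℝ) : v ⬝ᵥ P *ᵥ v ≤ v ⬝ᵥ v := by
  have hPv : P *ᵥ v ⬝ᵥ P *ᵥ v = v ⬝ᵥ P *ᵥ v := by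
    rw [dotProduct_mulVec, vecMul_mulVec, ← mulVec_transpose, hsymm, hidem, dotProduct_comm,
      hsymm]
  have h : 0 ≤ (v - P *ᵥ v) ⬝ᵥ (v - P *ᵥ v) := dotProduct_self_star_nonneg _
  simp only [sub_dotProduct, dotProduct_sub, hPv, dotProduct_comm (P *ᵥ v) v] at h
  linarith

end Euclidean

lemma mulVec_dotProduct_self_le {m n : ℕ} (A : Matrix (Fin m) (Fin n) ℝ) (v : Fin n → ℝ) :
    A *ᵥ v ⬝ᵥ A *ᵥ v ≤ specNorm A ^ 2 * (v ⬝ᵥ v) := by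
  rw [dotProduct_self_eq_norm_sq, dotProduct_self_eq_norm_sq, ← mul_pow]
  gcongr
  exact (LinearMap.toContinuousLinearMap (toEuclideanLin A)).le_opNorm (WithLp.toLp 2 v)

-- With the convention `_ / 0 = 0` this also holds for `A = 0`.
lemma mulVec_dotProduct_self_div_le {m n : ℕ} (A : Matrix (Fin m) (Fin n) ℝ) (v : Fin n → ℝ) :
    A *ᵥ v ⬝ᵥ A *ᵥ v / specNorm A ^ 2 ≤ v ⬝ᵥ v :=
  div_le_of_le_mul₀ (sq_nonneg _) (dotProduct_self_star_nonneg v)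
    (by rw [mul_comm]; exact mulVec_dotProduct_self_le A v)

-- On `Null(A)` both sides vanish.
lemma mul_mulVec_dotProduct_self_div_le_sum {m n q : ℕ} (A : Matrix (Fin m) (Fin n) ℝ)
    (M : Fin q → Matrix (Fin m) (Fin m) ℝ) (p : Fin q → ℝ) {σ : ℝ} (hσ : 0 ≤ σ)
    (hspec : ∀ v : Fin n → ℝ, A *ᵥ v ≠ 0 →
      σ * (v ⬝ᵥ v) ≤ ∑ i, p i * (v ⬝ᵥ (Aᵀ * M i * A) *ᵥ v))
    (v : Fin n → ℝ) :
    σ * (A *ᵥ v ⬝ᵥ A *ᵥ v / specNorm A ^ 2) ≤ ∑ i, p i * (v ⬝ᵥ (Aᵀ * M i * A) *ᵥ v) := by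
  by_cases hAv : A *ᵥ v = 0
  · simp [hAv, ← mulVec_mulVec]
  · exact (mul_le_mul_of_nonneg_left (mulVec_dotProduct_self_div_le A v) hσ).trans (hspec v hAv)

lemma sum_mul_le_sub_sum_mul {ι : Type*} [Fintype ι] {p a d : ι → ℝ} {D : ℝ}
    (hp : ∀ i, 0 ≤ p i) (hp1 : ∑ i, p i = 1) (h : ∀ i, a i ≤ D - d i) :
    ∑ i, p i * a i ≤ D - ∑ i, p i * d i :=
  calc ∑ i, p i * a i ≤ ∑ i, p i * (D - d i) :=
        Finset.sum_le_sum fun i _ => mul_le_mul_of_nonneg_left (h i) (hp i)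
    _ = D - ∑ i, p i * d i := by
        simp only [mul_sub, Finset.sum_sub_distrib, ← Finset.sum_mul, hp1, one_mul]

lemma StronglyConvexWith.mul_dotProduct_sub_le_breg {n : ℕ} {μ : ℝ} {f : (Fin n → ℝ) → ℝ}
    (hf : StronglyConvexWith μ f) {x xs : Fin n → ℝ} (hxs : IsSubgrad f x xs) (y : Fin n → ℝ) :
    μ / 2 * ((x - y) ⬝ᵥ (x - y)) ≤ breg f xs x y := by
  have h := hf x y xs hxs
  rw [← neg_sub x y, neg_dotProduct_neg, neg_sub] at h
  unfold breg
  linarith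

section Sketch

variable {ι κ : Type*} [Fintype ι] [Fintype κ] {B : Matrix κ ι ℝ} {W : Matrix κ κ ℝ}

lemma dotProduct_transpose_mul_mul_mulVec (B : Matrix κ ι ℝ) (W : Matrix κ κ ℝ) (u : ι → ℝ) :
    u ⬝ᵥ (Bᵀ * W * B) *ᵥ u = B *ᵥ u ⬝ᵥ W *ᵥ (B *ᵥ u) := by
  rw [← mulVec_mulVec, ← mulVec_mulVec, dotProduct_mulVec, vecMul_transpose]

-- `W (B Bᵀ) W = W` makes `Bᵀ W B` idempotent, so it is the orthogonal projection onto the row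
-- space of `B`, and `x - z`, `x - y` have the same projection.
lemma dotProduct_sub_mulVec_le_of_mulVec_eq (hW : Wᵀ = W) (hWMW : W * (B * Bᵀ) * W = W)
    {x y z : ι → ℝ} (hyz : B *ᵥ y = B *ᵥ z) :
    (x - z) ⬝ᵥ (Bᵀ * W * B) *ᵥ (x - z) ≤ (x - y) ⬝ᵥ (x - y) := by
  have hsymm : (Bᵀ * W * B)ᵀ = Bᵀ * W * B := by
    simp only [transpose_mul, transpose_transpose, hW, Matrix.mul_assoc]
  have hidem : (Bᵀ * W * B) * (Bᵀ * W * B) = Bᵀ * W * B :=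
    calc _ = Bᵀ * (W * (B * Bᵀ) * W) * B := by simp only [Matrix.mul_assoc]
      _ = _ := by rw [hWMW]
  have hsame : B *ᵥ (x - z) = B *ᵥ (x - y) := by rw [mulVec_sub, mulVec_sub, hyz]
  rw [dotProduct_transpose_mul_mul_mulVec, hsame, ← dotProduct_transpose_mul_mul_mulVec]
  exact dotProduct_mulVec_le_of_isIdempotent hsymm hidem _

end Sketch

lemma StronglyConvexWith.mul_dotProduct_sketch_le_breg {m n τ : ℕ} {μ : ℝ}
    {f : (Fin n → ℝ) → ℝ} (hf : StronglyConvexWith μ f) (hμ : 0 ≤ μ) {x xs : Fin n → ℝ}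
    (hxs : IsSubgrad f x xs) {A : Matrix (Fin m) (Fin n) ℝ} {S : Matrix (Fin m) (Fin τ) ℝ}
    {W : Matrix (Fin τ) (Fin τ) ℝ} (hW : Wᵀ = W) (hWMW : W * (Sᵀ * A * Aᵀ * S) * W = W)
    {y z : Fin n → ℝ} (hyz : (Sᵀ * A) *ᵥ y = (Sᵀ * A) *ᵥ z) :
    μ / 2 * ((x - z) ⬝ᵥ (Aᵀ * (S * W * Sᵀ) * A) *ᵥ (x - z)) ≤ breg f xs x y := by
  have hZ : Aᵀ * (S * W * Sᵀ) * A = (Sᵀ * A)ᵀ * W * (Sᵀ * A) := by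
    simp only [transpose_mul, transpose_transpose, Matrix.mul_assoc]
  have hWMW' : W * ((Sᵀ * A) * (Sᵀ * A)ᵀ) * W = W := by
    simpa only [transpose_mul, transpose_transpose, Matrix.mul_assoc] using hWMW
  rw [hZ]
  exact (mul_le_mul_of_nonneg_left (dotProduct_sub_mulVec_le_of_mulVec_eq hW hWMW' hyz)
    (by positivity)).trans (hf.mul_dotProduct_sub_le_breg hxs y)

theorem stmt6_general {m n τ q : ℕ} (A : Matrix (Fin m) (Fin n) ℝ)
    (b : Fin m → ℝ) (xbar : Fin n → ℝ) (hxbar : A.mulVec xbar = b)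
    (S : Fin q → Matrix (Fin m) (Fin τ) ℝ) (W : Fin q → Matrix (Fin τ) (Fin τ) ℝ)
    (hWsym : ∀ i, (W i)ᵀ = W i)
    (hWMW : ∀ i, W i * ((S i)ᵀ * A * Aᵀ * S i) * W i = W i)
    (f : (Fin n → ℝ) → ℝ) (μ : ℝ) (hμ : 0 < μ) (hf : StronglyConvexWith μ f)
    (x xs : Fin n → ℝ) (hxs : IsSubgrad f x xs)
    (p : Fin q → ℝ) (hp : ∀ i, 0 < p i) (hp1 : ∑ i, p i = 1)
    (σ : ℝ) (hσ : 0 < σ)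
    (hspec : ∀ v : Fin n → ℝ, A.mulVec v ≠ 0 →
      σ * (v ⬝ᵥ v) ≤ ∑ i, p i * (v ⬝ᵥ (Aᵀ * (S i * W i * (S i)ᵀ) * A).mulVec v))
    (γ : ℝ)
    (herr : γ * breg f xs x xbar ≤ (A.mulVec x - b) ⬝ᵥ (A.mulVec x - b))
    (xhat xhs : Fin q → (Fin n → ℝ))
    (hxhatL : ∀ i, ((S i)ᵀ * A).mulVec (xhat i) = (S i)ᵀ.mulVec b)
    (hadm : ∀ i, ∀ y : Fin n → ℝ, ((S i)ᵀ * A).mulVec y = (S i)ᵀ.mulVec b →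
      breg f (xhs i) (xhat i) y ≤ breg f xs x y - breg f xs x (xhat i)) :
    ∑ i, p i * breg f (xhs i) (xhat i) xbar ≤
      (1 - μ * γ * σ / (2 * (specNorm A) ^ 2)) * breg f xs x xbar := by
  set w := x - xbar
  have hxbarL : ∀ i, ((S i)ᵀ * A) *ᵥ xbar = (S i)ᵀ *ᵥ b := fun i => by
    rw [← mulVec_mulVec, hxbar]
  have hres : A *ᵥ w = A *ᵥ x - b := by rw [mulVec_sub, hxbar]
  have hprogress : μ * σ / (2 * specNorm A ^ 2) * ((A *ᵥ x - b) ⬝ᵥ (A *ᵥ x - b)) ≤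
      ∑ i, p i * breg f xs x (xhat i) :=
    calc _ = μ / 2 * (σ * (A *ᵥ w ⬝ᵥ A *ᵥ w / specNorm A ^ 2)) := by rw [hres]; ring
      _ ≤ μ / 2 * ∑ i, p i * (w ⬝ᵥ (Aᵀ * (S i * W i * (S i)ᵀ) * A) *ᵥ w) := by
          gcongr
          exact mul_mulVec_dotProduct_self_div_le_sum A _ p hσ.le hspec w
      _ ≤ ∑ i, p i * breg f xs x (xhat i) := by
          rw [Finset.mul_sum]
          refine Finset.sum_le_sum fun i _ => ?_
          rw [mul_left_comm]
          exact mul_le_mul_of_nonneg_left (hf.mul_dotProduct_sketch_le_breg hμ.le hxs (hWsym i)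
            (hWMW i) ((hxhatL i).trans (hxbarL i).symm)) (hp i).le
  have hdescent : ∑ i, p i * breg f (xhs i) (xhat i) xbar ≤
      breg f xs x xbar - ∑ i, p i * breg f xs x (xhat i) :=
    sum_mul_le_sub_sum_mul (fun i => (hp i).le) hp1 fun i => hadm i xbar (hxbarL i)
  calc _ ≤ breg f xs x xbar - ∑ i, p i * breg f xs x (xhat i) := hdescent
    _ ≤ breg f xs x xbar - μ * σ / (2 * specNorm A ^ 2) * (γ * breg f xs x xbar) :=
      sub_le_sub_left ((mul_le_mul_of_nonneg_left herr (by positivity)).trans hprogress) _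
    _ = _ := by ring

/-- one-step linear contraction of the non-adaptive sketched Bregman
projection method: Σ p_i D_f^{x̂_{i,*}}(x̂_i, x̄) ≤ (1 − μγσ/(2‖A‖²))·D_f^{x_*}(x, x̄). -/
theorem stmt6 {m n τ q : ℕ} (A : Matrix (Fin m) (Fin n) ℝ) (hA : A ≠ 0)
    (b : Fin m → ℝ) (xbar : Fin n → ℝ) (hxbar : A.mulVec xbar = b)
    (S : Fin q → Matrix (Fin m) (Fin τ) ℝ) (W : Fin q → Matrix (Fin τ) (Fin τ) ℝ)
    (hWsym : ∀ i, (W i)ᵀ = W i)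
    (hMWM : ∀ i, ((S i)ᵀ * A * Aᵀ * S i) * W i * ((S i)ᵀ * A * Aᵀ * S i)
      = (S i)ᵀ * A * Aᵀ * S i)
    (hWMW : ∀ i, W i * ((S i)ᵀ * A * Aᵀ * S i) * W i = W i)
    (hMW : ∀ i, (((S i)ᵀ * A * Aᵀ * S i) * W i)ᵀ = ((S i)ᵀ * A * Aᵀ * S i) * W i)
    (hWM : ∀ i, (W i * ((S i)ᵀ * A * Aᵀ * S i))ᵀ = W i * ((S i)ᵀ * A * Aᵀ * S i))
    (f : (Fin n → ℝ) → ℝ) (μ : ℝ) (hμ : 0 < μ) (hf : StronglyConvexWith μ f)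
    (x xs : Fin n → ℝ) (hxs : IsSubgrad f x xs)
    (p : Fin q → ℝ) (hp : ∀ i, 0 < p i) (hp1 : ∑ i, p i = 1)
    (σ : ℝ) (hσ : 0 < σ)
    (hspec : ∀ v : Fin n → ℝ, A.mulVec v ≠ 0 →
      σ * (v ⬝ᵥ v) ≤ ∑ i, p i * (v ⬝ᵥ (Aᵀ * (S i * W i * (S i)ᵀ) * A).mulVec v))
    (γ : ℝ) (hγ : 0 < γ)
    (herr : γ * breg f xs x xbar ≤ (A.mulVec x - b) ⬝ᵥ (A.mulVec x - b))
    (xhat xhs : Fin q → (Fin n → ℝ))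
    (hxhatL : ∀ i, ((S i)ᵀ * A).mulVec (xhat i) = (S i)ᵀ.mulVec b)
    (hxhs : ∀ i, IsSubgrad f (xhat i) (xhs i))
    (hadm : ∀ i, ∀ y : Fin n → ℝ, ((S i)ᵀ * A).mulVec y = (S i)ᵀ.mulVec b →
      breg f (xhs i) (xhat i) y ≤ breg f xs x y - breg f xs x (xhat i)) :
    ∑ i, p i * breg f (xhs i) (xhat i) xbar ≤
      (1 - μ * γ * σ / (2 * (specNorm A) ^ 2)) * breg f xs x xbar :=
  stmt6_general A b xbar hxbar S W hWsym hWMW f μ hμ hf x xs hxs p hp hp1 σ hσ hspec γ herr xhat xhs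
    hxhatL hadm
end

section
/- The max-distance rule is strictly faster than any fixed sampling rule: let f : ℝ^n → ℝ be μ-strongly convex, x ∈ ℝ^n, x_* ∈ ∂f(x), A x̄ = b, and p ∈ Δ_q^† with q ≥ 2; set η := 1/(max_{l} Σ_{j≠l} p_j). Assume (i) g_j(x) = 0 for some index j; (ii) a spectral bound: σ > 0 with Σ_i p_i·vᵀ Z_i v ≥ σ‖v‖² for all v ∉ Null(A); (iii) an error bound: γ > 0 with γ·D_f^{x_*}(x, x̄) ≤ ‖Ax − b‖²; (iv) i* maximizes g_i(x) over i, and x̂ satisfies S_{i*}ᵀ A x̂ = S_{i*}ᵀ b with x̂_* ∈ ∂f(x̂) satisfying D_f^{x̂_*}(x̂, y) ≤ D_f^{x_*}(x, y) − D_f^{x_*}(x, x̂) for all y with S_{i*}ᵀ A y = S_{i*}ᵀ b. Then D_f^{x̂_*}(x̂, x̄) ≤ (1 − ημγσ/(2‖A‖²))·D_f^{x_*}(x, x̄), where ‖A‖ is the spectral norm of A (assume A ≠ 0), and η > 1. -/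
open Matrix

/-- Maximum of a real-valued function over a finite nonempty index type. -/
noncomputable def fmax {ι : Type*} [Fintype ι] [Nonempty ι] (v : ι → ℝ) : ℝ :=
  Finset.univ.sup' Finset.univ_nonempty v

/-!
Write `g_i := g_i(x)` and `D := D_f^{x_*}(x, x̄)`. Since `g_j = 0` for some `j` and `g_{i*}` is
the largest `g_i`, the `p`-average of the `g_i` is at most `(max_l ∑_{j ≠ l} p_j) g_{i*} = g_{i*}/η`.
The spectral bound applied to `x - x̄`, together with `‖Ax - b‖ ≤ ‖A‖ ‖x - x̄‖` and the error
bound, gives `σ γ D ≤ ‖A‖² ∑ p_i g_i`. Since `Aᵀ H_{i*} A` is an orthogonal projection,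
`g_{i*} ≤ ‖x̂ - x‖²`, and strong convexity turns this into `D_f^{x_*}(x, x̂) ≥ μ/2 · g_{i*}`.
The three-point inequality for `x̂` then yields the contraction.
-/

section DotProduct

variable {R k n : Type*} [Fintype k] [Fintype n]

lemma real_dotProduct_self_nonneg (v : n → ℝ) : 0 ≤ v ⬝ᵥ v :=
  Fintype.sum_nonneg fun i => mul_self_nonneg (v i)

lemma dotProduct_mulVec_transpose_mul_mul [CommSemiring R] (A : Matrix k n R)
    (H : Matrix k k R) (v : n → R) :
    v ⬝ᵥ (Aᵀ * H * A) *ᵥ v = A *ᵥ v ⬝ᵥ H *ᵥ (A *ᵥ v) := by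
  rw [← mulVec_mulVec, ← mulVec_mulVec, dotProduct_mulVec, vecMul_transpose]

lemma dotProduct_mulVec_le_dotProduct_self_of_idempotent {P : Matrix n n ℝ} (hPt : Pᵀ = P)
    (hPP : P * P = P) (d : n → ℝ) : d ⬝ᵥ P *ᵥ d ≤ d ⬝ᵥ d := by
  have hPd : P *ᵥ d ⬝ᵥ P *ᵥ d = d ⬝ᵥ P *ᵥ d := by
    rw [dotProduct_mulVec, ← mulVec_transpose, hPt, mulVec_mulVec, hPP, dotProduct_comm]
  have hcomm : P *ᵥ d ⬝ᵥ d = d ⬝ᵥ P *ᵥ d := dotProduct_comm _ _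
  have hsq := real_dotProduct_self_nonneg (d - P *ᵥ d)
  simp only [sub_dotProduct, dotProduct_sub] at hsq
  linarith

/-- For a symmetric generalized inverse `W` of `B Bᵀ`, `Bᵀ W B` is an orthogonal projection. -/
lemma quadForm_mulVec_le_dotProduct_self (B : Matrix k n ℝ) {W : Matrix k k ℝ} (hW : Wᵀ = W)
    (hWBW : W * (B * Bᵀ) * W = W) (d : n → ℝ) :
    B *ᵥ d ⬝ᵥ W *ᵥ (B *ᵥ d) ≤ d ⬝ᵥ d := by
  rw [← dotProduct_mulVec_transpose_mul_mul]
  refine dotProduct_mulVec_le_dotProduct_self_of_idempotent ?_ ?_ d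
  · rw [transpose_mul, transpose_mul, hW, transpose_transpose, Matrix.mul_assoc]
  · calc Bᵀ * W * B * (Bᵀ * W * B) = Bᵀ * (W * (B * Bᵀ) * W) * B := by
          simp only [Matrix.mul_assoc]
      _ = Bᵀ * W * B := by rw [hWBW]

end DotProduct

section Sketch

variable {m n τ : Type*} [Fintype m] [Fintype n] [Fintype τ]

lemma sketchedResidual_le_dist_sq (A : Matrix m n ℝ) (S : Matrix m τ ℝ) {W : Matrix τ τ ℝ}
    (hW : Wᵀ = W) (hWMW : W * (Sᵀ * A * Aᵀ * S) * W = W) {b : m → ℝ} (x : n → ℝ) {xhat : n → ℝ}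
    (hxhat : (Sᵀ * A) *ᵥ xhat = Sᵀ *ᵥ b) :
    (A *ᵥ x - b) ⬝ᵥ (S * W * Sᵀ) *ᵥ (A *ᵥ x - b) ≤ (xhat - x) ⬝ᵥ (xhat - x) := by
  have hWBW : W * ((Sᵀ * A) * (Sᵀ * A)ᵀ) * W = W := by
    simpa only [transpose_mul, transpose_transpose, Matrix.mul_assoc] using hWMW
  have hB : (Sᵀ * A) *ᵥ (x - xhat) = Sᵀ *ᵥ (A *ᵥ x - b) := by
    rw [mulVec_sub, hxhat, ← mulVec_mulVec, mulVec_sub]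
  have h := quadForm_mulVec_le_dotProduct_self (Sᵀ * A) hW hWBW (x - xhat)
  rw [hB, ← dotProduct_mulVec_transpose_mul_mul, transpose_transpose, ← neg_sub xhat x,
    neg_dotProduct_neg] at h
  exact h

end Sketch

section SpectralNorm

variable {m n : ℕ}

lemma EuclideanSpace.norm_toLp_sq {k : Type*} [Fintype k] (w : k → ℝ) :
    ‖WithLp.toLp 2 w‖ ^ 2 = w ⬝ᵥ w := by
  rw [EuclideanSpace.real_norm_sq_eq]
  simp [dotProduct, sq]

lemma mulVec_dotProduct_mulVec_le_specNorm_sq (A : Matrix (Fin m) (Fin n) ℝ) (v : Fin n → ℝ) :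
    A *ᵥ v ⬝ᵥ A *ᵥ v ≤ specNorm A ^ 2 * (v ⬝ᵥ v) := by
  have h := (LinearMap.toContinuousLinearMap (toEuclideanLin A)).le_opNorm (WithLp.toLp 2 v)
  rw [LinearMap.coe_toContinuousLinearMap', toEuclideanLin, toLpLin_toLp, toLin'_apply] at h
  rw [← EuclideanSpace.norm_toLp_sq, ← EuclideanSpace.norm_toLp_sq, specNorm, ← mul_pow]
  exact pow_le_pow_left₀ (norm_nonneg _) h 2

lemma specNorm_pos {A : Matrix (Fin m) (Fin n) ℝ} (hA : A ≠ 0) : 0 < specNorm A := by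
  rw [specNorm, norm_pos_iff]
  exact fun h => hA ((LinearEquiv.map_eq_zero_iff _).mp ((LinearEquiv.map_eq_zero_iff _).mp h))

lemma mul_le_specNorm_sq_mul_sum_quadForm {ι : Type*} [Fintype ι] (A : Matrix (Fin m) (Fin n) ℝ)
    {b : Fin m → ℝ} {xbar : Fin n → ℝ} (hxbar : A *ᵥ xbar = b) (H : ι → Matrix (Fin m) (Fin m) ℝ)
    (p : ι → ℝ) {σ : ℝ} (hσ : 0 ≤ σ)
    (hspec : ∀ v : Fin n → ℝ, A *ᵥ v ≠ 0 →
      σ * (v ⬝ᵥ v) ≤ ∑ i, p i * (v ⬝ᵥ (Aᵀ * H i * A) *ᵥ v))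
    {x : Fin n → ℝ} {E : ℝ} (hE : E ≤ (A *ᵥ x - b) ⬝ᵥ (A *ᵥ x - b)) :
    σ * E ≤ specNorm A ^ 2 * ∑ i, p i * ((A *ᵥ x - b) ⬝ᵥ H i *ᵥ (A *ᵥ x - b)) := by
  have hAv : A *ᵥ (x - xbar) = A *ᵥ x - b := by rw [mulVec_sub, hxbar]
  by_cases hr : A *ᵥ x - b = 0
  · rw [hr] at hE ⊢
    simp only [dotProduct_zero, mulVec_zero, mul_zero, Finset.sum_const_zero] at hE ⊢
    exact mul_nonpos_of_nonneg_of_nonpos hσ hE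
  · calc σ * E ≤ σ * (specNorm A ^ 2 * ((x - xbar) ⬝ᵥ (x - xbar))) := by
          gcongr
          exact hE.trans (hAv ▸ mulVec_dotProduct_mulVec_le_specNorm_sq A (x - xbar))
      _ = specNorm A ^ 2 * (σ * ((x - xbar) ⬝ᵥ (x - xbar))) := by ring
      _ ≤ specNorm A ^ 2 * ∑ i, p i * ((A *ᵥ x - b) ⬝ᵥ H i *ᵥ (A *ᵥ x - b)) := by
          gcongr
          have h := hspec (x - xbar) (hAv ▸ hr)
          simp only [dotProduct_mulVec_transpose_mul_mul] at h
          rwa [hAv] at h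

end SpectralNorm

section MaxRule

variable {ι : Type*} [Fintype ι] [Nonempty ι] [DecidableEq ι]

lemma sum_erase_le_fmax (p : ι → ℝ) (j : ι) :
    ∑ i ∈ Finset.univ.erase j, p i ≤ fmax (fun l => ∑ i ∈ Finset.univ.erase l, p i) :=
  Finset.le_sup' (fun l => ∑ i ∈ Finset.univ.erase l, p i) (Finset.mem_univ j)

lemma fmax_sum_erase_lt_one {p : ι → ℝ} (hp : ∀ i, 0 < p i) (hp1 : ∑ i, p i = 1) :
    fmax (fun l => ∑ i ∈ Finset.univ.erase l, p i) < 1 := by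
  rw [fmax, Finset.sup'_lt_iff]
  intro l _
  linarith [Finset.sum_erase_add Finset.univ p (Finset.mem_univ l), hp l]

lemma fmax_sum_erase_pos (hι : 1 < Fintype.card ι) {p : ι → ℝ} (hp : ∀ i, 0 < p i) :
    0 < fmax (fun l => ∑ i ∈ Finset.univ.erase l, p i) := by
  obtain ⟨j⟩ := ‹Nonempty ι›
  have hne : (Finset.univ.erase j).Nonempty := by
    rw [← Finset.card_pos, Finset.card_erase_of_mem (Finset.mem_univ j), Finset.card_univ]
    omega
  exact (Finset.sum_pos (fun i _ => hp i) hne).trans_le (sum_erase_le_fmax p j)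

lemma sum_mul_le_fmax_sum_erase_mul {p g : ι → ℝ} (hp : ∀ i, 0 ≤ p i) {j k : ι} (hj : g j = 0)
    (hk : ∀ i, g i ≤ g k) :
    ∑ i, p i * g i ≤ fmax (fun l => ∑ i ∈ Finset.univ.erase l, p i) * g k := by
  have hgk : 0 ≤ g k := hj ▸ hk j
  calc ∑ i, p i * g i = ∑ i ∈ Finset.univ.erase j, p i * g i := by
        rw [← Finset.sum_erase_add Finset.univ _ (Finset.mem_univ j), hj, mul_zero, add_zero]
    _ ≤ ∑ i ∈ Finset.univ.erase j, p i * g k := by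
        gcongr with i
        exacts [hp i, hk i]
    _ = (∑ i ∈ Finset.univ.erase j, p i) * g k := by rw [Finset.sum_mul]
    _ ≤ fmax (fun l => ∑ i ∈ Finset.univ.erase l, p i) * g k := by
        gcongr
        exact sum_erase_le_fmax p j

end MaxRule

lemma StronglyConvexWith.mul_dotProduct_le_breg {n : ℕ} {μ : ℝ} {f : (Fin n → ℝ) → ℝ}
    (hf : StronglyConvexWith μ f) {x xs : Fin n → ℝ} (hx : IsSubgrad f x xs) (y : Fin n → ℝ) :
    μ / 2 * ((y - x) ⬝ᵥ (y - x)) ≤ breg f xs x y := by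
  have hsc := hf x y xs hx
  rw [breg]
  linarith

theorem stmt9_general {m n τ q : ℕ} [NeZero q] (hq : 2 ≤ q)
    (A : Matrix (Fin m) (Fin n) ℝ) (hA : A ≠ 0)
    (b : Fin m → ℝ) (xbar : Fin n → ℝ) (hxbar : A.mulVec xbar = b)
    (S : Fin q → Matrix (Fin m) (Fin τ) ℝ) (W : Fin q → Matrix (Fin τ) (Fin τ) ℝ)
    (hWsym : ∀ i, (W i)ᵀ = W i)
    (hWMW : ∀ i, W i * ((S i)ᵀ * A * Aᵀ * S i) * W i = W i)
    (f : (Fin n → ℝ) → ℝ) (μ : ℝ) (hμ : 0 < μ) (hf : StronglyConvexWith μ f)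
    (x xs : Fin n → ℝ) (hxs : IsSubgrad f x xs)
    (p : Fin q → ℝ) (hp : ∀ i, 0 < p i) (hp1 : ∑ i, p i = 1)
    (j₀ : Fin q)
    (hj₀ : (A.mulVec x - b) ⬝ᵥ (S j₀ * W j₀ * (S j₀)ᵀ).mulVec (A.mulVec x - b) = 0)
    (σ : ℝ) (hσ : 0 < σ)
    (hspec : ∀ v : Fin n → ℝ, A.mulVec v ≠ 0 →
      σ * (v ⬝ᵥ v) ≤ ∑ i, p i * (v ⬝ᵥ (Aᵀ * (S i * W i * (S i)ᵀ) * A).mulVec v))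
    (γ : ℝ)
    (herr : γ * breg f xs x xbar ≤ (A.mulVec x - b) ⬝ᵥ (A.mulVec x - b))
    (istar : Fin q)
    (hstar : ∀ i, (A.mulVec x - b) ⬝ᵥ (S i * W i * (S i)ᵀ).mulVec (A.mulVec x - b) ≤
      (A.mulVec x - b) ⬝ᵥ (S istar * W istar * (S istar)ᵀ).mulVec (A.mulVec x - b))
    (xhat xhs : Fin n → ℝ)
    (hxhatL : ((S istar)ᵀ * A).mulVec xhat = (S istar)ᵀ.mulVec b)
    (hadm : ∀ y : Fin n → ℝ, ((S istar)ᵀ * A).mulVec y = (S istar)ᵀ.mulVec b →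
      breg f xhs xhat y ≤ breg f xs x y - breg f xs x xhat) :
    breg f xhs xhat xbar ≤
      (1 - (1 / fmax (fun l => ∑ j ∈ Finset.univ.erase l, p j)) * μ * γ * σ /
        (2 * (specNorm A) ^ 2)) * breg f xs x xbar ∧
    1 < 1 / fmax (fun l => ∑ j ∈ Finset.univ.erase l, p j) := by
  set F := fmax (fun l => ∑ j ∈ Finset.univ.erase l, p j)
  set g : Fin q → ℝ := fun i => (A *ᵥ x - b) ⬝ᵥ (S i * W i * (S i)ᵀ) *ᵥ (A *ᵥ x - b)
  have hF0 : 0 < F := fmax_sum_erase_pos (by rw [Fintype.card_fin]; omega) hp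
  have hN := specNorm_pos hA
  have hspectral : σ * (γ * breg f xs x xbar) ≤ specNorm A ^ 2 * ∑ i, p i * g i :=
    mul_le_specNorm_sq_mul_sum_quadForm A hxbar _ p hσ.le hspec herr
  have hgreedy : ∑ i, p i * g i ≤ F * g istar :=
    sum_mul_le_fmax_sum_erase_mul (fun i => (hp i).le) hj₀ hstar
  have hproj : g istar ≤ (xhat - x) ⬝ᵥ (xhat - x) :=
    sketchedResidual_le_dist_sq A (S istar) (hWsym istar) (hWMW istar) x hxhatL
  have hdescent : μ / 2 * g istar ≤ breg f xs x xhat :=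
    (mul_le_mul_of_nonneg_left hproj (by positivity)).trans (hf.mul_dotProduct_le_breg hxs xhat)
  have hthreePoint := hadm xbar (by rw [← mulVec_mulVec, hxbar])
  refine ⟨?_, one_lt_one_div hF0 (fmax_sum_erase_lt_one hp hp1)⟩
  have hrate : 1 / F * μ * γ * σ / (2 * specNorm A ^ 2) * breg f xs x xbar ≤ μ / 2 * g istar :=
    calc 1 / F * μ * γ * σ / (2 * specNorm A ^ 2) * breg f xs x xbar
        = μ / (2 * F * specNorm A ^ 2) * (σ * (γ * breg f xs x xbar)) := by
          field_simp
      _ ≤ μ / (2 * F * specNorm A ^ 2) * (specNorm A ^ 2 * (F * g istar)) := by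
          refine mul_le_mul_of_nonneg_left (hspectral.trans ?_) (by positivity)
          exact mul_le_mul_of_nonneg_left hgreedy (by positivity)
      _ = μ / 2 * g istar := by
          field_simp
  linarith

/-- the max-distance rule is strictly faster than any fixed sampling rule:
D_f^{x̂_*}(x̂, x̄) ≤ (1 − ημγσ/(2‖A‖²))·D_f^{x_*}(x, x̄), with η := 1/(max_l Σ_{j≠l} p_j) > 1. -/
theorem stmt9 {m n τ q : ℕ} [NeZero q] (hq : 2 ≤ q)
    (A : Matrix (Fin m) (Fin n) ℝ) (hA : A ≠ 0)
    (b : Fin m → ℝ) (xbar : Fin n → ℝ) (hxbar : A.mulVec xbar = b)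
    (S : Fin q → Matrix (Fin m) (Fin τ) ℝ) (W : Fin q → Matrix (Fin τ) (Fin τ) ℝ)
    (hWsym : ∀ i, (W i)ᵀ = W i)
    (hMWM : ∀ i, ((S i)ᵀ * A * Aᵀ * S i) * W i * ((S i)ᵀ * A * Aᵀ * S i)
      = (S i)ᵀ * A * Aᵀ * S i)
    (hWMW : ∀ i, W i * ((S i)ᵀ * A * Aᵀ * S i) * W i = W i)
    (hMW : ∀ i, (((S i)ᵀ * A * Aᵀ * S i) * W i)ᵀ = ((S i)ᵀ * A * Aᵀ * S i) * W i)
    (hWM : ∀ i, (W i * ((S i)ᵀ * A * Aᵀ * S i))ᵀ = W i * ((S i)ᵀ * A * Aᵀ * S i))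
    (f : (Fin n → ℝ) → ℝ) (μ : ℝ) (hμ : 0 < μ) (hf : StronglyConvexWith μ f)
    (x xs : Fin n → ℝ) (hxs : IsSubgrad f x xs)
    (p : Fin q → ℝ) (hp : ∀ i, 0 < p i) (hp1 : ∑ i, p i = 1)
    (j₀ : Fin q)
    (hj₀ : (A.mulVec x - b) ⬝ᵥ (S j₀ * W j₀ * (S j₀)ᵀ).mulVec (A.mulVec x - b) = 0)
    (σ : ℝ) (hσ : 0 < σ)
    (hspec : ∀ v : Fin n → ℝ, A.mulVec v ≠ 0 →
      σ * (v ⬝ᵥ v) ≤ ∑ i, p i * (v ⬝ᵥ (Aᵀ * (S i * W i * (S i)ᵀ) * A).mulVec v))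
    (γ : ℝ) (hγ : 0 < γ)
    (herr : γ * breg f xs x xbar ≤ (A.mulVec x - b) ⬝ᵥ (A.mulVec x - b))
    (istar : Fin q)
    (hstar : ∀ i, (A.mulVec x - b) ⬝ᵥ (S i * W i * (S i)ᵀ).mulVec (A.mulVec x - b) ≤
      (A.mulVec x - b) ⬝ᵥ (S istar * W istar * (S istar)ᵀ).mulVec (A.mulVec x - b))
    (xhat xhs : Fin n → ℝ)
    (hxhatL : ((S istar)ᵀ * A).mulVec xhat = (S istar)ᵀ.mulVec b)
    (hxhs : IsSubgrad f xhat xhs)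
    (hadm : ∀ y : Fin n → ℝ, ((S istar)ᵀ * A).mulVec y = (S istar)ᵀ.mulVec b →
      breg f xhs xhat y ≤ breg f xs x y - breg f xs x xhat) :
    breg f xhs xhat xbar ≤
      (1 - (1 / fmax (fun l => ∑ j ∈ Finset.univ.erase l, p j)) * μ * γ * σ /
        (2 * (specNorm A) ^ 2)) * breg f xs x xbar ∧
    1 < 1 / fmax (fun l => ∑ j ∈ Finset.univ.erase l, p j) :=
  stmt9_general hq A hA b xbar hxbar S W hWsym hWMW f μ hμ hf x xs hxs p hp hp1 j₀ hj₀ σ hσ hspec γ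
    herr istar hstar xhat xhs hxhatL hadm
end
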